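/- For partitions X₁, …, Xₙ of Ω, the total correlation TC := Σᵢ H(Xᵢ) − H(X₁∨⋯∨Xₙ) equals Σᵢ μ(ΔXᵢ) − μ(∪ᵢ ΔXᵢ); in particular TC is the measure, counted with multiplicity, of atoms crossed by more than one of the Xᵢ: TC = Σ_{S} (c(S) − 1)·μ(S) where the sum is over atoms S crossed by at least one Xᵢ and c(S) = #{i : S ∈ ΔXᵢ}. -/

import Mathlib

open Finset BigOperators

variable {Ω : Type*} [Fintype Ω] [DecidableEq Ω]

/-- Probability of a subset: `p(T) = Σ_{ω∈T} p(ω)`. -/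
def pS (p : Ω → ℝ) (T : Finset Ω) : ℝ := ∑ ω ∈ T, p ω

/-- `p(T) log p(T)` (with `0 log 0 = 0` since `Real.log 0 = 0`). -/
noncomputable def plog (p : Ω → ℝ) (T : Finset Ω) : ℝ := pS p T * Real.log (pS p T)

/-- The interior-loss measure of an atom `S`. -/
noncomputable def mu (p : Ω → ℝ) (S : Finset Ω) : ℝ :=
  ∑ T ∈ S.powerset.filter (· ≠ ∅), (-1 : ℝ) ^ (S.card - T.card) * plog p T

/-- `μ` of a set of atoms, extended additively. -/
noncomputable def muSet (p : Ω → ℝ) (R : Finset (Finset Ω)) : ℝ := ∑ S ∈ R, mu p S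

/-- A partition `X` crosses an atom `S` when `S` meets at least two distinct parts. -/
def crossed (X : Finpartition (univ : Finset Ω)) (S : Finset Ω) : Prop :=
  ∃ P ∈ X.parts, ∃ Q ∈ X.parts, P ≠ Q ∧ (S ∩ P).Nonempty ∧ (S ∩ Q).Nonempty

open scoped Classical in
/-- The content `ΔX`: set of atoms crossed by the partition `X`. -/
noncomputable def content (X : Finpartition (univ : Finset Ω)) : Finset (Finset Ω) :=
  (univ : Finset (Finset Ω)).filter (fun S => 2 ≤ S.card ∧ crossed X S)

/-- Shannon entropy of a partition. -/
noncomputable def Hent (p : Ω → ℝ) (X : Finpartition (univ : Finset Ω)) : ℝ :=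
  - ∑ P ∈ X.parts, pS p P * Real.log (pS p P)

/-- `X` refines `Z`: every part of `X` lies in a part of `Z`. -/
def refines (X Z : Finpartition (univ : Finset Ω)) : Prop :=
  ∀ P ∈ X.parts, ∃ Q ∈ Z.parts, P ⊆ Q

/-!
`mu p` is the Möbius transform of `T ↦ p(T) log p(T)` on the Boolean lattice of atoms, so summing
it over all subsets of `A` gives back `p(A) log p(A)`. The atoms not crossed by a partition `X` are
the subsets of its parts, hence `μ(ΔX) = p(Ω) log p(Ω) - Σ_P p(P) log p(P) = H(X)`. The common
refinement is the meet `⊓` of `Finpartition`, and an atom is crossed by `X ⊓ Y` iff it is crossed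
by `X` or by `Y`, so `Δ(X₁ ∨ ⋯ ∨ Xₙ) = ⋃ ΔXᵢ`; the multiplicity form is double counting.
-/

namespace Finset

variable {α R : Type*} [DecidableEq α] [CommRing R]

theorem sum_Icc_neg_one_pow_card_sub {T A : Finset α} (h : T ⊆ A) :
    ∑ S ∈ Icc T A, (-1 : R) ^ (#S - #T) = if T = A then 1 else 0 := by
  have hinj : Set.InjOn (T ∪ ·) ((A \ T).powerset : Set (Finset α)) := fun U hU V hV hUV => by
    rw [← union_sdiff_cancel_left (disjoint_of_subset_right (mem_powerset.1 hU) disjoint_sdiff),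
      ← union_sdiff_cancel_left (disjoint_of_subset_right (mem_powerset.1 hV) disjoint_sdiff)]
    exact congrArg (· \ T) hUV
  calc ∑ S ∈ Icc T A, (-1 : R) ^ (#S - #T)
      = ∑ U ∈ (A \ T).powerset, (-1 : R) ^ #U := by
        rw [Icc_eq_image_powerset h, sum_image hinj]
        refine sum_congr rfl fun U hU => ?_
        rw [card_union_of_disjoint (disjoint_of_subset_right (mem_powerset.1 hU) disjoint_sdiff),
          Nat.add_sub_cancel_left]
    _ = ((∑ U ∈ (A \ T).powerset, (-1 : ℤ) ^ #U : ℤ) : R) := by push_cast; rfl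
    _ = if T = A then 1 else 0 := by
        have hsdiff : A \ T = ∅ ↔ T = A := by
          rw [sdiff_eq_empty_iff_subset]
          exact ⟨subset_antisymm h, fun hTA => hTA ▸ subset_rfl⟩
        rw [sum_powerset_neg_one_pow_card, Int.cast_ite, Int.cast_one, Int.cast_zero]
        exact if_congr hsdiff rfl rfl

theorem sum_powerset_sum_powerset_neg_one_pow_mul (f : Finset α → R) (A : Finset α) :
    ∑ S ∈ A.powerset, ∑ T ∈ S.powerset, (-1 : R) ^ (#S - #T) * f T = f A := by
  calc ∑ S ∈ A.powerset, ∑ T ∈ S.powerset, (-1 : R) ^ (#S - #T) * f T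
      = ∑ T ∈ A.powerset, (∑ S ∈ Icc T A, (-1 : R) ^ (#S - #T)) * f T := by
        simp_rw [sum_mul]
        exact sum_comm' fun S T => by
          simp only [mem_powerset, mem_Icc]
          exact ⟨fun ⟨hSA, hTS⟩ => ⟨⟨hTS, hSA⟩, hTS.trans hSA⟩, fun ⟨⟨hTS, hSA⟩, _⟩ => ⟨hSA, hTS⟩⟩
    _ = f A := by
        rw [sum_congr rfl fun T hT => by rw [sum_Icc_neg_one_pow_card_sub (mem_powerset.1 hT)]]
        simp

theorem sum_sum_eq_sum_biUnion_card_nsmul {ι β M : Type*} [DecidableEq β] [AddCommMonoid M]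
    (s : Finset ι) (R : ι → Finset β) (f : β → M) :
    ∑ i ∈ s, ∑ b ∈ R i, f b = ∑ b ∈ s.biUnion R, #{i ∈ s | b ∈ R i} • f b := by
  rw [sum_comm' (t' := s.biUnion R) (s' := fun b => {i ∈ s | b ∈ R i})]
  · simp only [sum_const]
  · intro i b
    simp only [mem_biUnion, mem_filter]
    exact ⟨fun ⟨hi, hb⟩ => ⟨⟨hi, hb⟩, i, hi, hb⟩, fun ⟨⟨hi, hb⟩, _⟩ => ⟨hi, hb⟩⟩

end Finset

namespace Finpartition

variable {α : Type*} [DecidableEq α] {s : Finset α}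

theorem part_inf (P Q : Finpartition s) (a : α) : (P ⊓ Q).part a = P.part a ∩ Q.part a := by
  by_cases ha : a ∈ s
  · have haPQ : a ∈ P.part a ∩ Q.part a := mem_inter.2 ⟨P.mem_part ha, Q.mem_part ha⟩
    refine (P ⊓ Q).part_eq_of_mem ?_ haPQ
    rw [parts_inf, mem_erase]
    exact ⟨ne_empty_of_mem haPQ, mem_image.2 ⟨(P.part a, Q.part a),
      mem_product.2 ⟨P.part_mem.2 ha, Q.part_mem.2 ha⟩, rfl⟩⟩
  · simp [part_eq_empty _ |>.2 ha]

end Finpartition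

section Atoms

variable {X : Finpartition (univ : Finset Ω)} {S : Finset Ω}

theorem crossed_iff_exists_notMem_part : crossed X S ↔ ∃ a ∈ S, ∃ b ∈ S, b ∉ X.part a := by
  constructor
  · rintro ⟨P, hP, Q, hQ, hPQ, ⟨a, ha⟩, ⟨b, hb⟩⟩
    obtain ⟨haS, haP⟩ := mem_inter.1 ha
    obtain ⟨hbS, hbQ⟩ := mem_inter.1 hb
    refine ⟨a, haS, b, hbS, fun hbP => hPQ ?_⟩
    rw [X.part_eq_of_mem hP haP] at hbP
    exact X.eq_of_mem_parts hP hQ hbP hbQ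
  · rintro ⟨a, haS, b, hbS, hb⟩
    refine ⟨X.part a, X.part_mem.2 (mem_univ a), X.part b, X.part_mem.2 (mem_univ b),
      fun h => hb (h ▸ X.mem_part (mem_univ b)), ⟨a, mem_inter.2 ⟨haS, X.mem_part (mem_univ a)⟩⟩,
      ⟨b, mem_inter.2 ⟨hbS, X.mem_part (mem_univ b)⟩⟩⟩

theorem crossed.two_le_card (h : crossed X S) : 2 ≤ #S := by
  obtain ⟨a, haS, b, hbS, hb⟩ := crossed_iff_exists_notMem_part.1 h
  exact one_lt_card.2 ⟨a, haS, b, hbS, fun hab => hb (hab ▸ X.mem_part (mem_univ a))⟩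

theorem mem_content : S ∈ content X ↔ crossed X S := by
  simp only [content, mem_filter, mem_univ, true_and, and_iff_right_iff_imp]
  exact crossed.two_le_card

theorem not_crossed_iff_exists_subset (hS : S.Nonempty) :
    ¬crossed X S ↔ ∃ P ∈ X.parts, S ⊆ P := by
  simp only [crossed_iff_exists_notMem_part, not_exists, not_and, not_not]
  constructor
  · obtain ⟨a, haS⟩ := hS
    exact fun h => ⟨X.part a, X.part_mem.2 (mem_univ a), h a haS⟩
  · rintro ⟨P, hP, hSP⟩ a haS b hbS
    rw [X.part_eq_of_mem hP (hSP haS)]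
    exact hSP hbS

theorem crossed_inf_iff {Y : Finpartition (univ : Finset Ω)} :
    crossed (X ⊓ Y) S ↔ crossed X S ∨ crossed Y S := by
  simp only [crossed_iff_exists_notMem_part, Finpartition.part_inf, mem_inter, not_and_or,
    and_or_left, exists_or]

theorem crossed_inf'_iff {ι : Type*} {s : Finset ι} (hs : s.Nonempty)
    (X : ι → Finpartition (univ : Finset Ω)) :
    crossed (s.inf' hs X) S ↔ ∃ i ∈ s, crossed (X i) S := by
  induction hs using Finset.Nonempty.cons_induction with
  | singleton i => simp
  | cons i s hi hs ih => simp [inf'_cons hs, crossed_inf_iff, ih]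

theorem content_inf' {ι : Type*} {s : Finset ι} (hs : s.Nonempty)
    (X : ι → Finpartition (univ : Finset Ω)) :
    content (s.inf' hs X) = s.biUnion fun i => content (X i) := by
  ext S
  simp only [mem_content, crossed_inf'_iff, mem_biUnion]

end Atoms

section Interior

variable {α : Type*} (p : α → ℝ)

theorem plog_empty : plog p ∅ = 0 := by simp [plog, pS]

theorem plog_univ_eq_zero [Fintype α] (hsum : ∑ a, p a = 1) : plog p univ = 0 := by
  simp [plog, pS, hsum]

variable [DecidableEq α]

theorem mu_empty : mu p ∅ = 0 := by simp [mu, filter_singleton]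

theorem nonempty_of_mu_ne_zero {S : Finset α} (hS : mu p S ≠ 0) : S.Nonempty :=
  nonempty_iff_ne_empty.2 fun h => hS (h ▸ mu_empty p)

theorem mu_eq_sum_powerset (S : Finset α) :
    mu p S = ∑ T ∈ S.powerset, (-1 : ℝ) ^ (#S - #T) * plog p T := by
  refine sum_filter_of_ne fun T _ hT => ?_
  rintro rfl
  simp [plog_empty] at hT

theorem sum_powerset_mu (A : Finset α) : ∑ S ∈ A.powerset, mu p S = plog p A := by
  simp only [mu_eq_sum_powerset]
  exact sum_powerset_sum_powerset_neg_one_pow_mul _ A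

end Interior

section Content

variable (p : Ω → ℝ)

theorem sum_compl_content_mu (X : Finpartition (univ : Finset Ω)) :
    ∑ S ∈ (content X)ᶜ, mu p S = ∑ P ∈ X.parts, plog p P := by
  have hdisj : (X.parts : Set (Finset Ω)).PairwiseDisjoint
      fun P => {S ∈ P.powerset | S.Nonempty} := by
    intro P hP Q hQ hPQ
    refine disjoint_left.2 fun S hSP hSQ => hPQ ?_
    simp only [mem_filter, mem_powerset] at hSP hSQ
    obtain ⟨a, ha⟩ := hSP.2
    exact X.eq_of_mem_parts hP hQ (hSP.1 ha) (hSQ.1 ha)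
  have hatoms : {S ∈ (content X)ᶜ | S.Nonempty}
      = X.parts.biUnion fun P => {S ∈ P.powerset | S.Nonempty} := by
    ext S
    simp only [mem_filter, mem_compl, mem_content, mem_biUnion, mem_powerset]
    constructor
    · rintro ⟨hS, hne⟩
      obtain ⟨P, hP, hSP⟩ := (not_crossed_iff_exists_subset hne).1 hS
      exact ⟨P, hP, hSP, hne⟩
    · rintro ⟨P, hP, hSP, hne⟩
      exact ⟨(not_crossed_iff_exists_subset hne).2 ⟨P, hP, hSP⟩, hne⟩
  calc ∑ S ∈ (content X)ᶜ, mu p S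
      = ∑ S ∈ X.parts.biUnion (fun P => {S ∈ P.powerset | S.Nonempty}), mu p S := by
        rw [← hatoms, sum_filter_of_ne fun S _ => nonempty_of_mu_ne_zero p]
    _ = ∑ P ∈ X.parts, ∑ S ∈ P.powerset, mu p S := by
        rw [sum_biUnion hdisj]
        exact sum_congr rfl fun P _ => sum_filter_of_ne fun S _ => nonempty_of_mu_ne_zero p
    _ = ∑ P ∈ X.parts, plog p P := by simp only [sum_powerset_mu]

theorem muSet_content (X : Finpartition (univ : Finset Ω)) :
    muSet p (content X) = Hent p X + plog p univ := by
  have hsplit := sum_compl_add_sum (content X) (mu p)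
  rw [sum_compl_content_mu, ← powerset_univ, sum_powerset_mu] at hsplit
  simp only [muSet, Hent, plog] at hsplit ⊢
  linarith

end Content

theorem totalCorrelation_eq_general {Ω : Type*} [Fintype Ω] [DecidableEq Ω] (p : Ω → ℝ)
    (hsum : ∑ ω, p ω = 1)
    {n : ℕ} (hn : 0 < n) (X : Fin n → Finpartition (univ : Finset Ω)) :
    (∑ i, Hent p (X i))
        - Hent p ((univ : Finset (Fin n)).inf'
            (univ_nonempty_iff.mpr (Fin.pos_iff_nonempty.mp hn)) X)
      = (∑ i, muSet p (content (X i)))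
          - muSet p ((univ : Finset (Fin n)).biUnion fun i => content (X i)) ∧
    (∑ i, Hent p (X i))
        - Hent p ((univ : Finset (Fin n)).inf'
            (univ_nonempty_iff.mpr (Fin.pos_iff_nonempty.mp hn)) X)
      = ∑ S ∈ (univ : Finset (Fin n)).biUnion (fun i => content (X i)),
          ((((univ : Finset (Fin n)).filter fun i => S ∈ content (X i)).card : ℝ) - 1)
            * mu p S := by
  have hHent : ∀ Y, Hent p Y = muSet p (content Y) := fun Y => by
    rw [muSet_content, plog_univ_eq_zero p hsum, add_zero]
  simp only [hHent, content_inf', true_and]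
  simp only [muSet, sum_sum_eq_sum_biUnion_card_nsmul, ← sum_sub_distrib, nsmul_eq_mul, sub_one_mul]

theorem totalCorrelation_eq {Ω : Type*} [Fintype Ω] [DecidableEq Ω] (p : Ω → ℝ)
    (hp : ∀ ω, 0 ≤ p ω) (hsum : ∑ ω, p ω = 1)
    {n : ℕ} (hn : 0 < n) (X : Fin n → Finpartition (univ : Finset Ω)) :
    (∑ i, Hent p (X i))
        - Hent p ((univ : Finset (Fin n)).inf'
            (univ_nonempty_iff.mpr (Fin.pos_iff_nonempty.mp hn)) X)
      = (∑ i, muSet p (content (X i)))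
          - muSet p ((univ : Finset (Fin n)).biUnion fun i => content (X i)) ∧
    (∑ i, Hent p (X i))
        - Hent p ((univ : Finset (Fin n)).inf'
            (univ_nonempty_iff.mpr (Fin.pos_iff_nonempty.mp hn)) X)
      = ∑ S ∈ (univ : Finset (Fin n)).biUnion (fun i => content (X i)),
          ((((univ : Finset (Fin n)).filter fun i => S ∈ content (X i)).card : ℝ) - 1)
            * mu p S :=
  totalCorrelation_eq_general p hsum hn X
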